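/- arXiv:0711.4701 — 4 statements merged into one kernel-verified Lean document; each statement's English description precedes it below -/
import Mathlib

section
/- Let γ, φ : ℝ×ℝ → ℝ (arguments (t,x)) be smooth, with ∂_x γ(t,x) > 0 for all (t,x) and with γ(t,·) : ℝ → ℝ bijective for each t. Fix t ∈ ℝ and δ > 0, and suppose ξ : (−δ, δ)×ℝ → ℝ is smooth and satisfies γ(t, ξ(ε,X)) + ε·φ(t, ξ(ε,X)) = X for all (ε,X), so that ξ(0,X) = γ(t,·)^{−1}(X). Define W(ε,X) = (∂_t γ)(t, ξ(ε,X)) + ε·(∂_t φ)(t, ξ(ε,X)), and write u(X) = W(0,X) (so u = γ_t∘γ^{−1}(·) at time t) and Ψ(X) = φ(t, ξ(0,X)). Then ∂_ε ∂_X W at (0,X) equals ∂_X[(∂_t φ)(t, ξ(0,·))](X) − u′(X)·Ψ′(X) − Ψ(X)·u″(X). (This is the paper's formula (d/dε)|_{ε=0} ∂_x[(γ_t + εφ_t)∘(γ + εφ)^{−1}] = ∂_x(φ_t∘γ^{−1}) − ∂_x(γ_t∘γ^{−1})·∂_x(φ∘γ^{−1}) − (φ∘γ^{−1})·∂_x²(γ_t∘γ^{−1}).)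 -/
open Set
open scoped ContDiff

/-- Partial derivative in the first (time) variable `t` of `γ = γ(t,x)`. -/
noncomputable def pdT (γ : ℝ × ℝ → ℝ) : ℝ × ℝ → ℝ :=
  fun p => deriv (fun t => γ (t, p.2)) p.1

/-- Partial derivative in the second (space) variable `x` of `γ = γ(t,x)`. -/
noncomputable def pdX (γ : ℝ × ℝ → ℝ) : ℝ × ℝ → ℝ :=
  fun p => deriv (fun x => γ (p.1, x)) p.2

/-- Smoothness of the time partial derivative as a function of the space variable. -/
lemma contDiff_pdT_slice (γ : ℝ × ℝ → ℝ) (hγ : ContDiff ℝ (⊤ : ℕ∞) γ) (t : ℝ) :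
    ContDiff ℝ ∞ (fun x : ℝ => pdT γ (t, x)) := by
  have key : ∀ x : ℝ, pdT γ (t, x) = fderiv ℝ γ (t, x) ((1 : ℝ), (0 : ℝ)) := by
    intro x
    have h2 : HasDerivAt (fun s : ℝ => (s, x)) ((1 : ℝ), (0 : ℝ)) t :=
      (hasDerivAt_id t).prodMk (hasDerivAt_const t x)
    have h3 : HasDerivAt (fun s : ℝ => γ (s, x)) (fderiv ℝ γ (t, x) ((1 : ℝ), (0 : ℝ))) t :=
      ((hγ.differentiable (by simp) (t, x)).hasFDerivAt).comp_hasDerivAt t h2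
    exact h3.deriv
  have : (fun x : ℝ => pdT γ (t, x))
      = fun x : ℝ => fderiv ℝ γ (t, x) ((1 : ℝ), (0 : ℝ)) := funext key
  rw [this]
  exact ((hγ.fderiv_right (by simp)).comp (contDiff_const.prodMk contDiff_id)).clm_apply contDiff_const

/-- Main auxiliary computation, phrased for one-variable functions at the fixed time. -/
lemma firstVariation_aux
    (g f a b : ℝ → ℝ) (hg : ContDiff ℝ ∞ g) (hf : ContDiff ℝ ∞ f)
    (ha : ContDiff ℝ ∞ a) (hb : ContDiff ℝ ∞ b)
    (hgpos : ∀ x, 0 < deriv g x)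
    (δ : ℝ) (hδ : 0 < δ) (ξ : ℝ × ℝ → ℝ)
    (hξ : ContDiffOn ℝ ∞ ξ (Ioo (-δ) δ ×ˢ univ))
    (hξinv : ∀ ε ∈ Ioo (-δ) δ, ∀ X : ℝ, g (ξ (ε, X)) + ε * f (ξ (ε, X)) = X)
    (X₀ : ℝ) :
    deriv (fun ε => deriv (fun X' => a (ξ (ε, X')) + ε * b (ξ (ε, X'))) X₀) 0
      = deriv (fun X' => b (ξ (0, X'))) X₀
        - deriv (fun X' => a (ξ (0, X'))) X₀ * deriv (fun X' => f (ξ (0, X'))) X₀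
        - f (ξ (0, X₀)) * deriv (deriv (fun X' => a (ξ (0, X')))) X₀ := by
  have h1inf : (∞ : WithTop ℕ∞) ≠ 0 := by simp
  have h0δ : (0 : ℝ) ∈ Ioo (-δ) δ := ⟨by linarith, hδ⟩
  have hU : IsOpen (Ioo (-δ) δ ×ˢ (univ : Set ℝ)) := isOpen_Ioo.prod isOpen_univ
  have hξdiff : ∀ ε ∈ Ioo (-δ) δ, ∀ X : ℝ, DifferentiableAt ℝ ξ (ε, X) := fun ε hε X =>
    (hξ.differentiableOn h1inf).differentiableAt (hU.mem_nhds ⟨hε, mem_univ X⟩)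
  have hg' : ContDiff ℝ ∞ (deriv g) := (contDiff_infty_iff_deriv.mp hg).2
  have hf' : ContDiff ℝ ∞ (deriv f) := (contDiff_infty_iff_deriv.mp hf).2
  have ha' : ContDiff ℝ ∞ (deriv a) := (contDiff_infty_iff_deriv.mp ha).2
  have hb' : ContDiff ℝ ∞ (deriv b) := (contDiff_infty_iff_deriv.mp hb).2
  -- spatial derivative of ξ
  have K1 : ∀ ε ∈ Ioo (-δ) δ, ∀ X : ℝ,
      HasDerivAt (fun X' => ξ (ε, X'))
        ((deriv g (ξ (ε, X)) + ε * deriv f (ξ (ε, X)))⁻¹) X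
      ∧ deriv g (ξ (ε, X)) + ε * deriv f (ξ (ε, X)) ≠ 0 := by
    intro ε hε X
    have hψ : DifferentiableAt ℝ (fun X' => ξ (ε, X')) X :=
      (hξdiff ε hε X).comp X ((differentiableAt_const ε).prodMk differentiableAt_id)
    set d := deriv (fun X' => ξ (ε, X')) X with hdd
    have hd : HasDerivAt (fun X' => ξ (ε, X')) d X := hψ.hasDerivAt
    have h1 : HasDerivAt (fun X' => g (ξ (ε, X'))) (deriv g (ξ (ε, X)) * d) X :=
      ((hg.differentiable h1inf (ξ (ε, X))).hasDerivAt).comp X hd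
    have h2 : HasDerivAt (fun X' => f (ξ (ε, X'))) (deriv f (ξ (ε, X)) * d) X :=
      ((hf.differentiable h1inf (ξ (ε, X))).hasDerivAt).comp X hd
    have hG : HasDerivAt (fun X' => g (ξ (ε, X')) + ε * f (ξ (ε, X')))
        (deriv g (ξ (ε, X)) * d + ε * (deriv f (ξ (ε, X)) * d)) X := h1.add (h2.const_mul ε)
    have hGid : (fun X' => g (ξ (ε, X')) + ε * f (ξ (ε, X'))) = fun X' => X' :=
      funext fun X' => hξinv ε hε X'
    rw [hGid] at hG
    have hone : deriv g (ξ (ε, X)) * d + ε * (deriv f (ξ (ε, X)) * d) = 1 :=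
      hG.unique (hasDerivAt_id X)
    have hDd : (deriv g (ξ (ε, X)) + ε * deriv f (ξ (ε, X))) * d = 1 := by
      rw [← hone]; ring
    have hD0 : deriv g (ξ (ε, X)) + ε * deriv f (ξ (ε, X)) ≠ 0 :=
      left_ne_zero_of_mul_eq_one hDd
    have hdval : d = (deriv g (ξ (ε, X)) + ε * deriv f (ξ (ε, X)))⁻¹ :=
      eq_inv_of_mul_eq_one_right hDd
    exact ⟨hdval ▸ hd, hD0⟩
  -- spatial derivative of the velocity slice
  have K1' : ∀ ε ∈ Ioo (-δ) δ, ∀ X : ℝ,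
      HasDerivAt (fun X' => a (ξ (ε, X')) + ε * b (ξ (ε, X')))
        ((deriv a (ξ (ε, X)) + ε * deriv b (ξ (ε, X)))
          / (deriv g (ξ (ε, X)) + ε * deriv f (ξ (ε, X)))) X := by
    intro ε hε X
    obtain ⟨hd, hD⟩ := K1 ε hε X
    have h1 : HasDerivAt (fun X' => a (ξ (ε, X')))
        (deriv a (ξ (ε, X)) * (deriv g (ξ (ε, X)) + ε * deriv f (ξ (ε, X)))⁻¹) X :=
      ((ha.differentiable h1inf (ξ (ε, X))).hasDerivAt).comp X hd
    have h2 : HasDerivAt (fun X' => ε * b (ξ (ε, X')))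
        (ε * (deriv b (ξ (ε, X)) * (deriv g (ξ (ε, X)) + ε * deriv f (ξ (ε, X)))⁻¹)) X :=
      (((hb.differentiable h1inf (ξ (ε, X))).hasDerivAt).comp X hd).const_mul ε
    have h3 := h1.add h2
    simp only [Pi.add_def] at h3
    exact h3.congr_deriv (by ring)
    try ring
  have hIooNhds : Ioo (-δ) δ ∈ nhds (0 : ℝ) := isOpen_Ioo.mem_nhds h0δ
  have hFeq : (fun ε => deriv (fun X' => a (ξ (ε, X')) + ε * b (ξ (ε, X'))) X₀)
      =ᶠ[nhds (0 : ℝ)] (fun ε => (deriv a (ξ (ε, X₀)) + ε * deriv b (ξ (ε, X₀)))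
        / (deriv g (ξ (ε, X₀)) + ε * deriv f (ξ (ε, X₀)))) := by
    filter_upwards [hIooNhds] with ε hε
    exact (K1' ε hε X₀).deriv
  rw [hFeq.deriv_eq]
  -- the ε-derivative of ξ at (0, X₀)
  have hη : DifferentiableAt ℝ (fun ε => ξ (ε, X₀)) 0 :=
    (hξdiff 0 h0δ X₀).comp 0 (differentiableAt_id.prodMk (differentiableAt_const X₀))
  set e := deriv (fun ε => ξ (ε, X₀)) 0 with he
  have hηe : HasDerivAt (fun ε => ξ (ε, X₀)) e 0 := hη.hasDerivAt
  have hgc0 : deriv g (ξ (0, X₀)) ≠ 0 := ne_of_gt (hgpos _)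
  -- value of e
  have hK2 : deriv g (ξ (0, X₀)) * e + f (ξ (0, X₀)) = 0 := by
    have hgc : HasDerivAt (fun ε => g (ξ (ε, X₀))) (deriv g (ξ (0, X₀)) * e) 0 :=
      ((hg.differentiable h1inf (ξ (0, X₀))).hasDerivAt).comp 0 hηe
    have hfc : HasDerivAt (fun ε => f (ξ (ε, X₀))) (deriv f (ξ (0, X₀)) * e) 0 :=
      ((hf.differentiable h1inf (ξ (0, X₀))).hasDerivAt).comp 0 hηe
    have h1 : HasDerivAt (fun ε => g (ξ (ε, X₀)) + ε * f (ξ (ε, X₀)))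
        (deriv g (ξ (0, X₀)) * e + (1 * f (ξ (0, X₀)) + 0 * (deriv f (ξ (0, X₀)) * e))) 0 :=
      hgc.add ((hasDerivAt_id 0).mul hfc)
    have heq : (fun _ : ℝ => X₀)
        =ᶠ[nhds (0 : ℝ)] fun ε => g (ξ (ε, X₀)) + ε * f (ξ (ε, X₀)) := by
      filter_upwards [hIooNhds] with ε hε
      exact (hξinv ε hε X₀).symm
    have h3 := h1.congr_of_eventuallyEq heq
    have h4 := h3.unique (hasDerivAt_const 0 X₀)
    linarith [h4]
  -- derivative of the explicit formula in ε at 0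
  have hN : HasDerivAt (fun ε => deriv a (ξ (ε, X₀)) + ε * deriv b (ξ (ε, X₀)))
      (deriv (deriv a) (ξ (0, X₀)) * e
        + (1 * deriv b (ξ (0, X₀)) + 0 * (deriv (deriv b) (ξ (0, X₀)) * e))) 0 :=
    (((ha'.differentiable h1inf (ξ (0, X₀))).hasDerivAt).comp 0 hηe).add
      ((hasDerivAt_id 0).mul (((hb'.differentiable h1inf (ξ (0, X₀))).hasDerivAt).comp 0 hηe))
  have hM : HasDerivAt (fun ε => deriv g (ξ (ε, X₀)) + ε * deriv f (ξ (ε, X₀)))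
      (deriv (deriv g) (ξ (0, X₀)) * e
        + (1 * deriv f (ξ (0, X₀)) + 0 * (deriv (deriv f) (ξ (0, X₀)) * e))) 0 :=
    (((hg'.differentiable h1inf (ξ (0, X₀))).hasDerivAt).comp 0 hηe).add
      ((hasDerivAt_id 0).mul (((hf'.differentiable h1inf (ξ (0, X₀))).hasDerivAt).comp 0 hηe))
  have hMne : deriv g (ξ (0, X₀)) + 0 * deriv f (ξ (0, X₀)) ≠ 0 := by
    simpa using hgc0
  have hG := (hN.div hM hMne).deriv
  simp only [Pi.div_def] at hG
  rw [hG]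
  -- now the right-hand side
  have hbd : deriv (fun X' => b (ξ (0, X'))) X₀
      = deriv b (ξ (0, X₀)) * (deriv g (ξ (0, X₀)) + 0 * deriv f (ξ (0, X₀)))⁻¹ :=
    (((hb.differentiable h1inf (ξ (0, X₀))).hasDerivAt).comp X₀ (K1 0 h0δ X₀).1).deriv
  have hfd : deriv (fun X' => f (ξ (0, X'))) X₀
      = deriv f (ξ (0, X₀)) * (deriv g (ξ (0, X₀)) + 0 * deriv f (ξ (0, X₀)))⁻¹ :=
    (((hf.differentiable h1inf (ξ (0, X₀))).hasDerivAt).comp X₀ (K1 0 h0δ X₀).1).deriv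
  have had : deriv (fun X' => a (ξ (0, X')))
      = fun X => deriv a (ξ (0, X)) * (deriv g (ξ (0, X)) + 0 * deriv f (ξ (0, X)))⁻¹ :=
    funext fun X =>
      (((ha.differentiable h1inf (ξ (0, X))).hasDerivAt).comp X (K1 0 h0δ X).1).deriv
  rw [hbd, hfd, had]
  -- second derivative term
  have p1 : HasDerivAt (fun X => deriv a (ξ (0, X)))
      (deriv (deriv a) (ξ (0, X₀)) * (deriv g (ξ (0, X₀)) + 0 * deriv f (ξ (0, X₀)))⁻¹) X₀ :=
    by have := ((ha'.differentiable h1inf (ξ (0, X₀))).hasDerivAt).comp X₀ (K1 0 h0δ X₀).1; exact this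
  have p2 : HasDerivAt (fun X => deriv g (ξ (0, X)) + 0 * deriv f (ξ (0, X)))
      (deriv (deriv g) (ξ (0, X₀)) * (deriv g (ξ (0, X₀)) + 0 * deriv f (ξ (0, X₀)))⁻¹
        + 0 * (deriv (deriv f) (ξ (0, X₀))
            * (deriv g (ξ (0, X₀)) + 0 * deriv f (ξ (0, X₀)))⁻¹)) X₀ :=
    by have := (((hg'.differentiable h1inf (ξ (0, X₀))).hasDerivAt).comp X₀ (K1 0 h0δ X₀).1).add
          ((((hf'.differentiable h1inf (ξ (0, X₀))).hasDerivAt).comp X₀ (K1 0 h0δ X₀).1).const_mul 0); exact this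
  have p3 := p2.inv hMne
  have p4 := (p1.mul p3).deriv
  simp only [Pi.mul_def, Pi.inv_def] at p4
  rw [p4]
  -- final algebra
  have he' : e = -(f (ξ (0, X₀))) / deriv g (ξ (0, X₀)) := by
    field_simp
    linarith [hK2]
  rw [he']
  field_simp
  ring

/-- First variation of the spatial derivative of the spatial velocity along the
variation `γ + εφ`: the paper's formula
`(d/dε)|₀ ∂_x[(γ_t + εφ_t) ∘ (γ + εφ)⁻¹]
  = ∂_x(φ_t ∘ γ⁻¹) − ∂_x(γ_t ∘ γ⁻¹) ∂_x(φ ∘ γ⁻¹) − (φ ∘ γ⁻¹) ∂_x²(γ_t ∘ γ⁻¹)`,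
at a fixed time `t`. -/
theorem firstVariation_derivSpatialVelocity
    (γ φ : ℝ × ℝ → ℝ) (hγ : ContDiff ℝ (⊤ : ℕ∞) γ) (hφ : ContDiff ℝ (⊤ : ℕ∞) φ)
    (hpos : ∀ t x, 0 < pdX γ (t, x))
    (hbij : ∀ t, Function.Bijective (fun x => γ (t, x)))
    (t δ : ℝ) (hδ : 0 < δ)
    (ξ : ℝ × ℝ → ℝ) (hξ : ContDiffOn ℝ (⊤ : ℕ∞) ξ (Ioo (-δ) δ ×ˢ univ))
    (hξinv : ∀ ε ∈ Ioo (-δ) δ, ∀ X : ℝ,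
      γ (t, ξ (ε, X)) + ε * φ (t, ξ (ε, X)) = X)
    (W : ℝ × ℝ → ℝ)
    (hW : ∀ ε X, W (ε, X) = pdT γ (t, ξ (ε, X)) + ε * pdT φ (t, ξ (ε, X)))
    (u Ψ : ℝ → ℝ)
    (hu : ∀ X, u X = W (0, X))
    (hΨ : ∀ X, Ψ X = φ (t, ξ (0, X))) :
    ∀ X : ℝ, deriv (fun ε => deriv (fun X' => W (ε, X')) X) 0
      = deriv (fun X' => pdT φ (t, ξ (0, X'))) X
          - deriv u X * deriv Ψ X - Ψ X * deriv (deriv u) X := by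
  intro X
  have hg : ContDiff ℝ ∞ (fun x : ℝ => γ (t, x)) :=
    (hγ.of_le (by simp)).comp (contDiff_const.prodMk contDiff_id)
  have hf : ContDiff ℝ ∞ (fun x : ℝ => φ (t, x)) :=
    (hφ.of_le (by simp)).comp (contDiff_const.prodMk contDiff_id)
  have ha : ContDiff ℝ ∞ (fun x : ℝ => pdT γ (t, x)) := contDiff_pdT_slice γ hγ t
  have hb : ContDiff ℝ ∞ (fun x : ℝ => pdT φ (t, x)) := contDiff_pdT_slice φ hφ t
  have hgpos : ∀ x, 0 < deriv (fun x : ℝ => γ (t, x)) x := fun x => hpos t x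
  have e1 : (fun ε => deriv (fun X' => W (ε, X')) X)
      = fun ε => deriv (fun X' => pdT γ (t, ξ (ε, X')) + ε * pdT φ (t, ξ (ε, X'))) X := by
    funext ε; congr 1; funext X'; exact hW ε X'
  have e2 : u = fun X' => pdT γ (t, ξ (0, X')) := by
    funext X'; rw [hu, hW]; ring
  have e3 : Ψ = fun X' => φ (t, ξ (0, X')) := funext hΨ
  rw [e1, e2, e3]
  exact firstVariation_aux (fun x => γ (t, x)) (fun x => φ (t, x))
    (fun x => pdT γ (t, x)) (fun x => pdT φ (t, x)) hg hf ha hb hgpos δ hδ ξ (hξ.of_le (by simp))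
    (fun ε hε X' => hξinv ε hε X') X
end

section
/- Suppose (u, v, p, η) is a smooth solution of the linearized shallow-water system which in addition is irrotational, i.e. u_z(x,z,t) = 0 for all x, t and z ∈ [0,1], and whose surface wave is unidirectional, i.e. η_t(x,t) + η_x(x,t) = 0 for all (x,t). Then there exists a constant c₀ ∈ ℝ such that for all x, t and all z ∈ [0,1]: u(x,z,t) = η(x,t) + c₀ and v(x,z,t) = −z·η_x(x,t). (This is the paper's solution formula (solirrot) for the irrotational case.) -/
open MeasureTheory Set

/-- Partial derivative in `x` of `f = f(x,z,t)`. -/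
noncomputable def pd1 (f : ℝ × ℝ × ℝ → ℝ) : ℝ × ℝ × ℝ → ℝ :=
  fun q => deriv (fun x => f (x, q.2.1, q.2.2)) q.1

/-- Partial derivative in `z` of `f = f(x,z,t)`. -/
noncomputable def pd2 (f : ℝ × ℝ × ℝ → ℝ) : ℝ × ℝ × ℝ → ℝ :=
  fun q => deriv (fun z => f (q.1, z, q.2.2)) q.2.1

/-- Partial derivative in `t` of `f = f(x,z,t)`. -/
noncomputable def pd3 (f : ℝ × ℝ × ℝ → ℝ) : ℝ × ℝ × ℝ → ℝ :=
  fun q => deriv (fun t => f (q.1, q.2.1, t)) q.2.2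

/-- Partial derivative in the first (spatial) variable `x` of `η = η(x,t)`. -/
noncomputable def pdx (η : ℝ × ℝ → ℝ) : ℝ × ℝ → ℝ :=
  fun p => deriv (fun x => η (x, p.2)) p.1

/-- Partial derivative in the second (time) variable `t` of `η = η(x,t)`. -/
noncomputable def pdt (η : ℝ × ℝ → ℝ) : ℝ × ℝ → ℝ :=
  fun p => deriv (fun t => η (p.1, t)) p.2

/-- The linearized shallow-water system on the strip `{(x,z,t) : 0 ≤ z ≤ 1}`:
`u_t + p_x = 0`, `p_z = 0`, `u_x + v_z = 0`, with boundary conditions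
`v = η_t` and `p = η` on `z = 1`, and `v = 0` on `z = 0`, all functions smooth. -/
structure LinearizedSWS (u v p : ℝ × ℝ × ℝ → ℝ) (η : ℝ × ℝ → ℝ) : Prop where
  smooth_u : ContDiff ℝ (⊤ : ℕ∞) u
  smooth_v : ContDiff ℝ (⊤ : ℕ∞) v
  smooth_p : ContDiff ℝ (⊤ : ℕ∞) p
  smooth_η : ContDiff ℝ (⊤ : ℕ∞) η
  euler_x : ∀ x t : ℝ, ∀ z ∈ Icc (0:ℝ) 1, pd3 u (x, z, t) + pd1 p (x, z, t) = 0
  euler_z : ∀ x t : ℝ, ∀ z ∈ Icc (0:ℝ) 1, pd2 p (x, z, t) = 0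
  mass_conservation : ∀ x t : ℝ, ∀ z ∈ Icc (0:ℝ) 1, pd1 u (x, z, t) + pd2 v (x, z, t) = 0
  kbc_surface : ∀ x t : ℝ, v (x, 1, t) = pdt η (x, t)
  dbc_surface : ∀ x t : ℝ, p (x, 1, t) = η (x, t)
  kbc_bed : ∀ x t : ℝ, v (x, 0, t) = 0


private lemma const_on_Icc {f : ℝ → ℝ} (hf : Differentiable ℝ f)
    (hd : ∀ z ∈ Icc (0:ℝ) 1, deriv f z = 0) : ∀ z ∈ Icc (0:ℝ) 1, f z = f 0 := by
  apply constant_of_derivWithin_zero (hf.differentiableOn)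
  intro z hz
  rw [(hf z).derivWithin ((uniqueDiffOn_Icc one_pos) z (Ico_subset_Icc_self hz))]
  exact hd z (Ico_subset_Icc_self hz)

private lemma pd_fst {F : ℝ × ℝ → ℝ} (hF : Differentiable ℝ F) (q : ℝ × ℝ) :
    deriv (fun x => F (x, q.2)) q.1 = fderiv ℝ F q (1, 0) := by
  have h : HasDerivAt (fun x => F (x, q.2)) (fderiv ℝ F q (1, 0)) q.1 := by
    have := (hF (q.1, q.2)).hasFDerivAt.comp_hasDerivAt q.1
      ((hasDerivAt_id q.1).prodMk (hasDerivAt_const q.1 q.2))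
    exact this
  exact h.deriv

private lemma pd_snd {F : ℝ × ℝ → ℝ} (hF : Differentiable ℝ F) (q : ℝ × ℝ) :
    deriv (fun t => F (q.1, t)) q.2 = fderiv ℝ F q (0, 1) := by
  have h : HasDerivAt (fun t => F (q.1, t)) (fderiv ℝ F q (0, 1)) q.2 := by
    have := (hF (q.1, q.2)).hasFDerivAt.comp_hasDerivAt q.2
      ((hasDerivAt_const q.2 q.1).prodMk (hasDerivAt_id q.2))
    exact this
  exact h.deriv

private lemma const_of_partials {F : ℝ × ℝ → ℝ} (hF : Differentiable ℝ F)
    (hx : ∀ q : ℝ × ℝ, deriv (fun x => F (x, q.2)) q.1 = 0)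
    (ht : ∀ q : ℝ × ℝ, deriv (fun t => F (q.1, t)) q.2 = 0) :
    ∀ q : ℝ × ℝ, F q = F (0, 0) := by
  intro q
  apply is_const_of_fderiv_eq_zero hF _ q (0, 0)
  intro y
  have e1 : fderiv ℝ F y (1, 0) = 0 := by rw [← pd_fst hF y]; exact hx y
  have e2 : fderiv ℝ F y (0, 1) = 0 := by rw [← pd_snd hF y]; exact ht y
  ext
  · simpa using e1
  · simpa using e2

private lemma diff_slice1 {f : ℝ × ℝ × ℝ → ℝ} (hf : Differentiable ℝ f) (z t : ℝ) :
    Differentiable ℝ (fun x => f (x, z, t)) :=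
  hf.comp (differentiable_id.prodMk ((differentiable_const z).prodMk (differentiable_const t)))

private lemma diff_slice2 {f : ℝ × ℝ × ℝ → ℝ} (hf : Differentiable ℝ f) (x t : ℝ) :
    Differentiable ℝ (fun z => f (x, z, t)) :=
  hf.comp ((differentiable_const x).prodMk (differentiable_id.prodMk (differentiable_const t)))

private lemma diff_slice3 {f : ℝ × ℝ × ℝ → ℝ} (hf : Differentiable ℝ f) (x z : ℝ) :
    Differentiable ℝ (fun t => f (x, z, t)) :=
  hf.comp ((differentiable_const x).prodMk ((differentiable_const z).prodMk differentiable_id))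

/-- The paper's solution formula (solirrot): an irrotational (`u_z = 0`)
unidirectional (`η_t + η_x = 0`) smooth solution of the linearized shallow-water
system satisfies `u = η + c₀` and `v = −z η_x` for some constant `c₀`. -/
theorem solution_irrotational_linearizedSWS
    (u v p : ℝ × ℝ × ℝ → ℝ) (η : ℝ × ℝ → ℝ)
    (hsys : LinearizedSWS u v p η)
    (hirrot : ∀ x t : ℝ, ∀ z ∈ Icc (0:ℝ) 1, pd2 u (x, z, t) = 0)
    (huni : ∀ x t : ℝ, pdt η (x, t) + pdx η (x, t) = 0) :
    ∃ c₀ : ℝ, ∀ x t : ℝ, ∀ z ∈ Icc (0:ℝ) 1,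
      u (x, z, t) = η (x, t) + c₀ ∧ v (x, z, t) = -z * pdx η (x, t) := by
  have hDu := hsys.smooth_u.differentiable (by simp)
  have hDv := hsys.smooth_v.differentiable (by simp)
  have hDη := hsys.smooth_η.differentiable (by simp)
  -- u is independent of z
  have hU : ∀ x t : ℝ, ∀ z ∈ Icc (0:ℝ) 1, u (x, z, t) = u (x, 1, t) := by
    intro x t z hz
    have h0 := const_on_Icc (diff_slice2 hDu x t) (fun z' hz' => hirrot x t z' hz')
    exact (h0 z hz).trans (h0 1 (by norm_num)).symm
  -- hence u_x is independent of z
  have hUx : ∀ x t : ℝ, ∀ z ∈ Icc (0:ℝ) 1, pd1 u (x, z, t) = pd1 u (x, 1, t) := by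
    intro x t z hz
    show deriv (fun x' => u (x', z, t)) x = deriv (fun x' => u (x', 1, t)) x
    congr 1
    funext x'
    exact hU x' t z hz
  -- the formula for v
  have hv : ∀ x t : ℝ, ∀ z ∈ Icc (0:ℝ) 1, v (x, z, t) = -z * pd1 u (x, 1, t) := by
    intro x t z hz
    set A := pd1 u (x, 1, t) with hAdef
    have hdiff : Differentiable ℝ (fun z' => v (x, z', t) + z' * A) :=
      (diff_slice2 hDv x t).add (differentiable_id.mul (differentiable_const A))
    have hd : ∀ z' ∈ Icc (0:ℝ) 1, deriv (fun z'' => v (x, z'', t) + z'' * A) z' = 0 := by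
      intro z' hz'
      have d1 : DifferentiableAt ℝ (fun z'' => v (x, z'', t)) z' := (diff_slice2 hDv x t) z'
      have d2 : DifferentiableAt ℝ (fun z'' => z'' * A) z' :=
        (differentiable_id.mul (differentiable_const A)) z'
      rw [deriv_fun_add d1 d2]
      have h1 : deriv (fun z'' => z'' * A) z' = A := by
        simp [deriv_mul_const_field]
      have h2 : deriv (fun z'' => v (x, z'', t)) z' = -A := by
        have hm := hsys.mass_conservation x t z' hz'
        have h3 := hUx x t z' hz'
        have h4 : pd2 v (x, z', t) = deriv (fun z'' => v (x, z'', t)) z' := rfl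
        rw [h4] at hm
        linarith
      rw [h1, h2]
      ring
    have h0 := const_on_Icc hdiff hd
    have e := h0 z hz
    simp only [hsys.kbc_bed x t, zero_mul, add_zero] at e
    linarith
  -- identify u_x at the surface with η_x
  have hA : ∀ x t : ℝ, pd1 u (x, 1, t) = pdx η (x, t) := by
    intro x t
    have h1 := hv x t 1 (by norm_num)
    rw [hsys.kbc_surface x t] at h1
    have h2 := huni x t
    linarith
  -- identify u_t at the surface with η_t
  have hUt : ∀ x t : ℝ, pd3 u (x, 1, t) = pdt η (x, t) := by
    intro x t
    have he := hsys.euler_x x t 1 (by norm_num)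
    have hp : pd1 p (x, 1, t) = pdx η (x, t) := by
      show deriv (fun x' => p (x', 1, t)) x = deriv (fun x' => η (x', t)) x
      congr 1
      funext x'
      exact hsys.dbc_surface x' t
    have h2 := huni x t
    linarith
  -- the function u(x,1,t) - η(x,t) is constant
  set F : ℝ × ℝ → ℝ := fun q => u (q.1, 1, q.2) - η q with hFdef
  have hDF : Differentiable ℝ F :=
    (hDu.comp (differentiable_fst.prodMk ((differentiable_const 1).prodMk differentiable_snd))).sub hDη
  have hFx : ∀ q : ℝ × ℝ, deriv (fun x => F (x, q.2)) q.1 = 0 := by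
    intro q
    have heq : (fun x => F (x, q.2)) = fun x => u (x, 1, q.2) - η (x, q.2) := rfl
    have d1 : DifferentiableAt ℝ (fun x' => u (x', 1, q.2)) q.1 := (diff_slice1 hDu 1 q.2) q.1
    have d2 : DifferentiableAt ℝ (fun x' => η (x', q.2)) q.1 :=
      (hDη.comp (differentiable_id.prodMk (differentiable_const q.2))) q.1
    rw [heq, deriv_fun_sub d1 d2]
    exact sub_eq_zero.mpr (hA q.1 q.2)
  have hFt : ∀ q : ℝ × ℝ, deriv (fun t => F (q.1, t)) q.2 = 0 := by
    intro q
    have heq : (fun t => F (q.1, t)) = fun t => u (q.1, 1, t) - η (q.1, t) := rfl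
    have d1 : DifferentiableAt ℝ (fun t' => u (q.1, 1, t')) q.2 := (diff_slice3 hDu q.1 1) q.2
    have d2 : DifferentiableAt ℝ (fun t' => η (q.1, t')) q.2 :=
      (hDη.comp ((differentiable_const q.1).prodMk differentiable_id)) q.2
    rw [heq, deriv_fun_sub d1 d2]
    exact sub_eq_zero.mpr (hUt q.1 q.2)
  have hFc := const_of_partials hDF hFx hFt
  refine ⟨F (0, 0), fun x t z hz => ?_⟩
  constructor
  · have h1 := hFc (x, t)
    have h2 := hU x t z hz
    simp only [hFdef] at h1
    rw [h2]
    simp only [hFdef]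
    linarith
  · rw [hv x t z hz, hA x t]
end

section
/- Let c ∈ ℝ. Suppose (u, v, p, η) is a smooth solution of the linearized shallow-water system which in addition satisfies the linear shear (constant vorticity) condition u_z(x,z,t) = c for all x, t and z ∈ [0,1], and whose surface wave is unidirectional, i.e. η_t(x,t) + η_x(x,t) = 0 for all (x,t). Then there exists a constant c₀ ∈ ℝ such that for all x, t and all z ∈ [0,1]: u(x,z,t) = η(x,t) + c·z + c₀ and v(x,z,t) = −z·η_x(x,t). (This is the paper's solution formula (solrotconst) for the linear shear case, where c = ω₀√(g h₀)/g.) -/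
open MeasureTheory Set

lemma constOnIcc (f : ℝ → ℝ) (hf : Differentiable ℝ f)
    (h : ∀ z ∈ Icc (0:ℝ) 1, deriv f z = 0) :
    ∀ z ∈ Icc (0:ℝ) 1, f z = f 0 := by
  have hud : UniqueDiffOn ℝ (Icc (0:ℝ) 1) := uniqueDiffOn_Icc one_pos
  intro z hz
  refine constant_of_derivWithin_zero hf.differentiableOn ?_ z hz
  intro y hy
  rw [(hf y).derivWithin (hud y (Ico_subset_Icc_self hy))]
  exact h y (Ico_subset_Icc_self hy)

/-- The paper's solution formula (solrotconst): a linear shear (`u_z = c`, constant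
vorticity) unidirectional (`η_t + η_x = 0`) smooth solution of the linearized
shallow-water system satisfies `u = η + c z + c₀` and `v = −z η_x` for some
constant `c₀`. -/
theorem solution_linearShear_linearizedSWS
    (c : ℝ) (u v p : ℝ × ℝ × ℝ → ℝ) (η : ℝ × ℝ → ℝ)
    (hsys : LinearizedSWS u v p η)
    (hshear : ∀ x t : ℝ, ∀ z ∈ Icc (0:ℝ) 1, pd2 u (x, z, t) = c)
    (huni : ∀ x t : ℝ, pdt η (x, t) + pdx η (x, t) = 0) :
    ∃ c₀ : ℝ, ∀ x t : ℝ, ∀ z ∈ Icc (0:ℝ) 1,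
      u (x, z, t) = η (x, t) + c * z + c₀ ∧ v (x, z, t) = -z * pdx η (x, t) := by
  obtain ⟨hu, hv, hp, hη, heux, heuz, hmass, hkbcs, hdbcs, hkbcb⟩ := hsys
  -- slice differentiability
  have hdu1 : ∀ z t : ℝ, Differentiable ℝ (fun x => u (x, z, t)) := fun z t =>
    (hu.comp (contDiff_id.prodMk contDiff_const)).differentiable (by simp)
  have hdu2 : ∀ x t : ℝ, Differentiable ℝ (fun z => u (x, z, t)) := fun x t =>
    (hu.comp (contDiff_const.prodMk (contDiff_id.prodMk contDiff_const))).differentiable (by simp)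
  have hdu3 : ∀ x z : ℝ, Differentiable ℝ (fun t => u (x, z, t)) := fun x z =>
    (hu.comp (contDiff_const.prodMk (contDiff_const.prodMk contDiff_id))).differentiable (by simp)
  have hdv2 : ∀ x t : ℝ, Differentiable ℝ (fun z => v (x, z, t)) := fun x t =>
    (hv.comp (contDiff_const.prodMk (contDiff_id.prodMk contDiff_const))).differentiable (by simp)
  have hdp2 : ∀ x t : ℝ, Differentiable ℝ (fun z => p (x, z, t)) := fun x t =>
    (hp.comp (contDiff_const.prodMk (contDiff_id.prodMk contDiff_const))).differentiable (by simp)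
  have hdη1 : ∀ t : ℝ, Differentiable ℝ (fun x => η (x, t)) := fun t =>
    (hη.comp (contDiff_id.prodMk contDiff_const)).differentiable (by simp)
  have hdη2 : ∀ x : ℝ, Differentiable ℝ (fun t => η (x, t)) := fun x =>
    (hη.comp (contDiff_const.prodMk contDiff_id)).differentiable (by simp)
  -- u is linear in z
  have hu_lin : ∀ x t : ℝ, ∀ z ∈ Icc (0:ℝ) 1, u (x, z, t) = u (x, 0, t) + c * z := by
    intro x t z hz
    have hf : Differentiable ℝ (fun z => u (x, z, t) - c * z) :=
      (hdu2 x t).sub ((differentiable_const c).mul differentiable_id)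
    have key := constOnIcc _ hf ?_ z hz
    · simp only [mul_zero, sub_zero] at key; linarith
    · intro y hy
      have H : HasDerivAt (fun z => u (x, z, t) - c * z)
          (deriv (fun z => u (x, z, t)) y - c * 1) y :=
        ((hdu2 x t y).hasDerivAt).sub ((hasDerivAt_id' (x := y)).const_mul c)
      rw [H.deriv]
      have h2 : deriv (fun z => u (x, z, t)) y = c := by
        simpa [pd2] using hshear x t y hy
      rw [h2]; ring
  -- p is constant in z, equal to η
  have hp_const : ∀ x t : ℝ, ∀ z ∈ Icc (0:ℝ) 1, p (x, z, t) = η (x, t) := by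
    intro x t z hz
    have key : ∀ z ∈ Icc (0:ℝ) 1, p (x, z, t) = p (x, 0, t) := by
      refine constOnIcc _ (hdp2 x t) ?_
      intro y hy
      simpa [pd2] using heuz x t y hy
    rw [key z hz, ← key 1 (by norm_num), hdbcs]
  -- pd1 p = pdx η on the strip
  have hp1 : ∀ x t : ℝ, ∀ z ∈ Icc (0:ℝ) 1, pd1 p (x, z, t) = pdx η (x, t) := by
    intro x t z hz
    simp only [pd1, pdx]
    congr 1
    funext x'
    exact hp_const x' t z hz
  -- pd1 u is independent of z
  have hu1 : ∀ x t : ℝ, ∀ z ∈ Icc (0:ℝ) 1, pd1 u (x, z, t) = pd1 u (x, 0, t) := by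
    intro x t z hz
    simp only [pd1]
    have h : (fun x' => u (x', z, t)) = fun x' => u (x', 0, t) + c * z := by
      funext x'; exact hu_lin x' t z hz
    rw [h, deriv_add_const]
  -- pd3 u is independent of z
  have hu3 : ∀ x t : ℝ, ∀ z ∈ Icc (0:ℝ) 1, pd3 u (x, z, t) = pd3 u (x, 0, t) := by
    intro x t z hz
    simp only [pd3]
    have h : (fun t' => u (x, z, t')) = fun t' => u (x, 0, t') + c * z := by
      funext t'; exact hu_lin x t' z hz
    rw [h]
    exact deriv_add_const _
  -- v formula in terms of pd1 u
  have hv_lin : ∀ x t : ℝ, ∀ z ∈ Icc (0:ℝ) 1, v (x, z, t) = -z * pd1 u (x, 0, t) := by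
    intro x t z hz
    set A := pd1 u (x, 0, t) with hA
    have hf : Differentiable ℝ (fun z => v (x, z, t) + A * z) :=
      (hdv2 x t).add ((differentiable_const A).mul differentiable_id)
    have key := constOnIcc _ hf ?_ z hz
    · simp only [mul_zero, add_zero, hkbcb] at key
      linarith
    · intro y hy
      have H : HasDerivAt (fun z => v (x, z, t) + A * z)
          (deriv (fun z => v (x, z, t)) y + A * 1) y :=
        ((hdv2 x t y).hasDerivAt).add ((hasDerivAt_id' (x := y)).const_mul A)
      rw [H.deriv]
      have h2 : deriv (fun z => v (x, z, t)) y = -A := by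
        have hm := hmass x t y hy
        rw [hu1 x t y hy] at hm
        have : pd2 v (x, y, t) = -A := by linarith
        simpa [pd2] using this
      rw [h2]; ring
  -- pd1 u (x,0,t) = pdx η
  have hgx : ∀ x t : ℝ, pd1 u (x, 0, t) = pdx η (x, t) := by
    intro x t
    have h1 := hv_lin x t 1 (by norm_num)
    rw [hkbcs] at h1
    have h2 := huni x t
    linarith
  -- pd3 u (x,0,t) = pdt η
  have hgt : ∀ x t : ℝ, pd3 u (x, 0, t) = pdt η (x, t) := by
    intro x t
    have h1 := heux x t 0 (by norm_num)
    rw [hp1 x t 0 (by norm_num)] at h1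
    have h2 := huni x t
    linarith
  -- φ = u(·,0,·) − η is constant
  have hconst_x : ∀ x t : ℝ, u (x, 0, t) - η (x, t) = u (0, 0, t) - η (0, t) := by
    intro x t
    refine is_const_of_deriv_eq_zero ((hdu1 0 t).sub (hdη1 t)) ?_ x 0
    intro y
    rw [deriv_sub ((hdu1 0 t) y) ((hdη1 t) y)]
    have := hgx y t
    simp only [pd1, pdx] at this
    rw [this, sub_self]
  have hconst_t : ∀ t : ℝ, u (0, 0, t) - η (0, t) = u (0, 0, 0) - η (0, 0) := by
    intro t
    refine is_const_of_deriv_eq_zero ((hdu3 0 0).sub (hdη2 0)) ?_ t 0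
    intro s
    rw [deriv_sub ((hdu3 0 0) s) ((hdη2 0) s)]
    have := hgt 0 s
    simp only [pd3, pdt] at this
    rw [this, sub_self]
  refine ⟨u (0, 0, 0) - η (0, 0), ?_⟩
  intro x t z hz
  constructor
  · have h1 := hu_lin x t z hz
    have h2 := hconst_x x t
    have h3 := hconst_t t
    linarith
  · rw [hv_lin x t z hz, hgx x t]
end

section
/- Suppose (u, v, p, η) is a smooth solution of the linearized shallow-water system whose surface wave is unidirectional, i.e. η_t(x,t) + η_x(x,t) = 0 for all (x,t). Then there exists a smooth function F : ℝ×ℝ → ℝ (arguments (x,z)), independent of time, such that for all x, t and all z ∈ [0,1]: u(x,z,t) = η(x,t) + F(x,z), v(x,z,t) = −z·η_x(x,t) − ∫₀^z F_x(x,s) ds, and moreover ∫₀^1 F_x(x,s) ds = 0 for all x. (This is the paper's solution structure (solarbitrar)–(fg) for an arbitrary underlying flow: the auxiliary function G(x,z) = ∫₀^z F_x(x,s) ds satisfies G_z = F_x and G(x,1) = G(x,0).) -/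
open MeasureTheory Set

section Aux

private lemma aux_deriv_slice_eq_fderiv (F : ℝ × ℝ → ℝ) (hF : ContDiff ℝ (⊤ : ℕ∞) F) (x s : ℝ) :
    deriv (fun x' => F (x', s)) x = fderiv ℝ F (x, s) (1, 0) := by
  have h1 : HasFDerivAt (fun x' : ℝ => ((x', s) : ℝ × ℝ))
      ((ContinuousLinearMap.id ℝ ℝ).prod 0) x :=
    (hasFDerivAt_id x).prodMk (hasFDerivAt_const s x)
  have h2 := ((hF.differentiable (by simp) (x, s)).hasFDerivAt.comp x h1).hasDerivAt
  simpa [Function.comp_def] using h2.deriv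

private lemma aux_cont_Fx (F : ℝ × ℝ → ℝ) (hF : ContDiff ℝ (⊤ : ℕ∞) F) (x : ℝ) :
    Continuous (fun s => deriv (fun x' => F (x', s)) x) := by
  have h : (fun s => deriv (fun x' => F (x', s)) x)
      = fun s => fderiv ℝ F (x, s) (1, 0) :=
    funext fun s => aux_deriv_slice_eq_fderiv F hF x s
  rw [h]
  exact ((hF.continuous_fderiv (by simp)).comp (Continuous.prodMk_right x)).clm_apply
    continuous_const

end Aux

/-- The paper's solution structure (solarbitrar)–(fg): a unidirectional
(`η_t + η_x = 0`) smooth solution of the linearized shallow-water system has the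
form `u = η + F(x,z)`, `v = −z η_x − ∫₀^z F_x(x,s) ds` for some time-independent
smooth `F` with `∫₀^1 F_x(x,s) ds = 0`. -/
theorem solution_arbitraryFlow_linearizedSWS
    (u v p : ℝ × ℝ × ℝ → ℝ) (η : ℝ × ℝ → ℝ)
    (hsys : LinearizedSWS u v p η)
    (huni : ∀ x t : ℝ, pdt η (x, t) + pdx η (x, t) = 0) :
    ∃ F : ℝ × ℝ → ℝ, ContDiff ℝ (⊤ : ℕ∞) F ∧
      (∀ x t : ℝ, ∀ z ∈ Icc (0:ℝ) 1,
        u (x, z, t) = η (x, t) + F (x, z) ∧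
        v (x, z, t) = -z * pdx η (x, t)
          - ∫ s in (0:ℝ)..z, deriv (fun x' => F (x', s)) x) ∧
      (∀ x : ℝ, (∫ s in (0:ℝ)..(1:ℝ), deriv (fun x' => F (x', s)) x) = 0) := by
  -- slice smoothness helpers
  have hu := hsys.smooth_u
  have hv := hsys.smooth_v
  have hp := hsys.smooth_p
  have hη := hsys.smooth_η
  have hux : ∀ z t : ℝ, Differentiable ℝ (fun x => u (x, z, t)) := fun z t =>
    (hu.comp (contDiff_id.prodMk (contDiff_const.prodMk contDiff_const))).differentiable (by simp)
  have hut : ∀ x z : ℝ, Differentiable ℝ (fun t => u (x, z, t)) := fun x z =>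
    (hu.comp (contDiff_const.prodMk (contDiff_const.prodMk contDiff_id))).differentiable (by simp)
  have hvz : ∀ x t : ℝ, ContDiff ℝ (⊤ : ℕ∞) (fun z => v (x, z, t)) := fun x t =>
    hv.comp (contDiff_const.prodMk (contDiff_id.prodMk contDiff_const))
  have hpz : ∀ x t : ℝ, ContDiff ℝ (⊤ : ℕ∞) (fun z => p (x, z, t)) := fun x t =>
    hp.comp (contDiff_const.prodMk (contDiff_id.prodMk contDiff_const))
  have hηx : ∀ t : ℝ, Differentiable ℝ (fun x => η (x, t)) := fun t =>
    (hη.comp (contDiff_id.prodMk contDiff_const)).differentiable (by simp)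
  have hηt : ∀ x : ℝ, Differentiable ℝ (fun t => η (x, t)) := fun x =>
    (hη.comp (contDiff_const.prodMk contDiff_id)).differentiable (by simp)
  -- definition of F
  set F : ℝ × ℝ → ℝ := fun q => u (q.1, q.2, 0) - η (q.1, 0) with hFdef
  have hF : ContDiff ℝ (⊤ : ℕ∞) F :=
    (hu.comp (contDiff_fst.prodMk (contDiff_snd.prodMk contDiff_const))).sub
      (hη.comp (contDiff_fst.prodMk contDiff_const))
  have hFx : ∀ s : ℝ, Differentiable ℝ (fun x' => F (x', s)) := fun s =>
    (hF.comp (contDiff_id.prodMk contDiff_const)).differentiable (by simp)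
  -- Step 1 : p = η on the strip
  have pEq : ∀ x t : ℝ, ∀ z ∈ Icc (0:ℝ) 1, p (x, z, t) = η (x, t) := by
    intro x t z hz
    have hsub : uIcc z 1 ⊆ Icc (0:ℝ) 1 := by
      rw [uIcc_of_le hz.2]; exact Icc_subset_Icc hz.1 le_rfl
    have hftc : ∫ s in z..1, deriv (fun s' => p (x, s', t)) s
        = p (x, 1, t) - p (x, z, t) := by
      apply intervalIntegral.integral_deriv_eq_sub
      · exact fun s _ => ((hpz x t).differentiable (by simp)).differentiableAt
      · exact (((hpz x t).continuous_deriv (by simp))).intervalIntegrable z 1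
    have hzero : ∫ s in z..1, deriv (fun s' => p (x, s', t)) s = 0 := by
      have heq : EqOn (fun s => deriv (fun s' => p (x, s', t)) s)
          (fun _ => (0:ℝ)) (uIcc z 1) := fun s hs => hsys.euler_z x t s (hsub hs)
      rw [intervalIntegral.integral_congr heq]
      simp
    have := hsys.dbc_surface x t
    rw [hzero] at hftc
    linarith
  -- Step 2 : u = η + F on the strip
  have uEq : ∀ x t : ℝ, ∀ z ∈ Icc (0:ℝ) 1, u (x, z, t) = η (x, t) + F (x, z) := by
    intro x t z hz
    have hderiv0 : ∀ s : ℝ, deriv (fun t' => u (x, z, t') - η (x, t')) s = 0 := by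
      intro s
      rw [deriv_fun_sub ((hut x z).differentiableAt) ((hηt x).differentiableAt)]
      have h1 : pd3 u (x, z, s) = - pd1 p (x, z, s) := by
        have := hsys.euler_x x s z hz; linarith
      have h2 : pd1 p (x, z, s) = pdx η (x, s) := by
        have hfn : (fun x' => p (x', z, s)) = fun x' => η (x', s) :=
          funext fun x' => pEq x' s z hz
        show deriv (fun x' => p (x', z, s)) x = pdx η (x, s)
        rw [hfn]; rfl
      have h3 : pdt η (x, s) = - pdx η (x, s) := by
        have := huni x s; linarith
      show pd3 u (x, z, s) - pdt η (x, s) = 0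
      rw [h1, h2, h3]; ring
    have hconst := is_const_of_deriv_eq_zero
      (f := fun t' => u (x, z, t') - η (x, t'))
      ((hut x z).sub (hηt x)) hderiv0 t 0
    have : u (x, z, t) - η (x, t) = F (x, z) := by
      simpa [hFdef] using hconst
    linarith
  -- pd1 u on the strip
  have uxEq : ∀ x t : ℝ, ∀ z ∈ Icc (0:ℝ) 1,
      pd1 u (x, z, t) = pdx η (x, t) + deriv (fun x' => F (x', z)) x := by
    intro x t z hz
    have hfn : (fun x' => u (x', z, t)) = fun x' => η (x', t) + F (x', z) :=
      funext fun x' => uEq x' t z hz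
    show deriv (fun x' => u (x', z, t)) x = _
    rw [hfn, deriv_fun_add ((hηx t).differentiableAt) ((hFx z).differentiableAt)]
    rfl
  -- Step 3 : the formula for v
  have vEq : ∀ x t : ℝ, ∀ z ∈ Icc (0:ℝ) 1,
      v (x, z, t) = -z * pdx η (x, t)
        - ∫ s in (0:ℝ)..z, deriv (fun x' => F (x', s)) x := by
    intro x t z hz
    have hsub : uIcc (0:ℝ) z ⊆ Icc (0:ℝ) 1 := by
      rw [uIcc_of_le hz.1]; exact Icc_subset_Icc le_rfl hz.2
    have hftc : ∫ s in (0:ℝ)..z, deriv (fun s' => v (x, s', t)) s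
        = v (x, z, t) - v (x, 0, t) := by
      apply intervalIntegral.integral_deriv_eq_sub
      · exact fun s _ => ((hvz x t).differentiable (by simp)).differentiableAt
      · exact (((hvz x t).continuous_deriv (by simp))).intervalIntegrable 0 z
    have hcongr : ∫ s in (0:ℝ)..z, deriv (fun s' => v (x, s', t)) s
        = ∫ s in (0:ℝ)..z, (-(pdx η (x, t) + deriv (fun x' => F (x', s)) x)) := by
      apply intervalIntegral.integral_congr
      intro s hs
      have hmem := hsub hs
      have h1 : pd2 v (x, s, t) = - pd1 u (x, s, t) := by
        have := hsys.mass_conservation x t s hmem; linarith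
      have h2 := uxEq x t s hmem
      show deriv (fun s' => v (x, s', t)) s = _
      have : pd2 v (x, s, t) = deriv (fun s' => v (x, s', t)) s := rfl
      rw [← this, h1, h2]
    have hval : ∫ s in (0:ℝ)..z,
        (-(pdx η (x, t) + deriv (fun x' => F (x', s)) x))
        = -z * pdx η (x, t) - ∫ s in (0:ℝ)..z, deriv (fun x' => F (x', s)) x := by
      rw [intervalIntegral.integral_neg,
        intervalIntegral.integral_add (intervalIntegrable_const)
          ((aux_cont_Fx F hF x).intervalIntegrable 0 z),
        intervalIntegral.integral_const, smul_eq_mul]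
      ring
    have hbed := hsys.kbc_bed x t
    rw [hcongr, hval] at hftc
    linarith
  refine ⟨F, hF, fun x t z hz => ⟨uEq x t z hz, vEq x t z hz⟩, fun x => ?_⟩
  have h1 := vEq x 0 1 ⟨zero_le_one, le_rfl⟩
  have h2 : v (x, 1, 0) = pdt η (x, 0) := hsys.kbc_surface x 0
  have h3 := huni x 0
  rw [h2] at h1
  linarith
end
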